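/- Let μ ∈ ℝ^{n_x} and z ∈ ℝ^{n_z} be fixed vectors, and let P₀ be an n_x×n_x real matrix such that S₀ := H·P₀·Hᵀ + R is invertible; set K₀ := P₀·Hᵀ·S₀⁻¹. Then the posterior-mean map P ↦ μ + K(P) ·ᵥ (z − H ·ᵥ μ), from n_x×n_x real matrices to ℝ^{n_x}, is Fréchet differentiable at P₀, and its derivative is the linear map Δ ↦ ((I − K₀·H) · Δ · Hᵀ · S₀⁻¹) ·ᵥ (z − H ·ᵥ μ). -/

import Mathlib

/-!
The posterior mean is `μ + K(P) *ᵥ v` with `v = z - H *ᵥ μ`, and `K ↦ K *ᵥ v` is continuous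
linear, so everything reduces to differentiating the Kalman gain `K(P) = P Hᵀ S(P)⁻¹`. The sup
norm on matrices is not submultiplicative, so the derivative of inversion is obtained by
transporting `Ring.inverse` along the algebra isomorphism `Matrix.toLin'` onto the complete normed
algebra of continuous endomorphisms of `m → 𝕜`, where `d(x⁻¹) = -x⁻¹ dx x⁻¹` is known. The product
rule then gives `dK = Δ Hᵀ S⁻¹ - P Hᵀ S⁻¹ H Δ Hᵀ S⁻¹ = (1 - K H) Δ Hᵀ S⁻¹`.
-/

open Matrix

attribute [local instance] Matrix.normedAddCommGroup Matrix.normedSpace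

theorem MulEquiv.map_ringInverse {M N : Type*} [MonoidWithZero M] [MonoidWithZero N]
    (e : M ≃* N) (x : M) : e (Ring.inverse x) = Ring.inverse (e x) := by
  by_cases hx : IsUnit x
  · obtain ⟨u, rfl⟩ := hx
    rw [Ring.inverse_unit]
    exact (Ring.inverse_unit (Units.map (e : M →* N) u)).symm
  · rw [Ring.inverse_non_unit x hx, Ring.inverse_non_unit _ (mt (isUnit_map_iff e x).1 hx),
      map_zero]

namespace Matrix

variable {𝕜 : Type*} [NontriviallyNormedField 𝕜] {l m n : Type*} [Fintype m]

def mulLeftCLM (X : Matrix l m 𝕜) : Matrix m n 𝕜 →L[𝕜] Matrix l n 𝕜 :=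
  ⟨mulLeftLinearMap n 𝕜 X, continuous_const.matrix_mul continuous_id⟩

def mulRightCLM (Y : Matrix m n 𝕜) : Matrix l m 𝕜 →L[𝕜] Matrix l n 𝕜 :=
  ⟨mulRightLinearMap l 𝕜 Y, continuous_id.matrix_mul continuous_const⟩

variable [CompleteSpace 𝕜] [Fintype l] [Fintype n]

theorem _root_.HasFDerivAt.matrix_mul {E : Type*} [NormedAddCommGroup E]
    [NormedSpace 𝕜 E] {f : E → Matrix l m 𝕜} {g : E → Matrix m n 𝕜} {f' : E →L[𝕜] Matrix l m 𝕜}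
    {g' : E →L[𝕜] Matrix m n 𝕜} {x : E} (hf : HasFDerivAt f f' x) (hg : HasFDerivAt g g' x) :
    HasFDerivAt (fun y => f y * g y) (mulLeftCLM (f x) ∘L g' + mulRightCLM (g x) ∘L f') x := by
  let B : Matrix l m 𝕜 →L[𝕜] Matrix m n 𝕜 →L[𝕜] Matrix l n 𝕜 :=
    LinearMap.toContinuousLinearMap (LinearMap.toContinuousLinearMap.toLinearMap ∘ₗ mulLinearMap 𝕜)
  exact B.hasFDerivAt_of_bilinear hf hg

theorem hasFDerivAt_inv [DecidableEq m] {A : Matrix m m 𝕜} (hA : IsUnit A) :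
    HasFDerivAt (fun M : Matrix m m 𝕜 => M⁻¹) (-(mulLeftCLM A⁻¹ ∘L mulRightCLM A⁻¹)) A := by
  let e : Matrix m m 𝕜 ≃ₐ[𝕜] ((m → 𝕜) →L[𝕜] (m → 𝕜)) :=
    toLinAlgEquiv'.trans (Module.End.toContinuousLinearMap (m → 𝕜))
  let eL : Matrix m m 𝕜 ≃L[𝕜] ((m → 𝕜) →L[𝕜] (m → 𝕜)) := e.toLinearEquiv.toContinuousLinearEquiv
  have e_inv (M : Matrix m m 𝕜) : e M⁻¹ = Ring.inverse (e M) := by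
    rw [nonsing_inv_eq_ringInverse]
    exact e.toRingEquiv.toMulEquiv.map_ringInverse M
  have inv_eq : (fun M : Matrix m m 𝕜 => M⁻¹) = fun M => eL.symm (Ring.inverse (eL M)) := by
    funext M
    exact eL.eq_symm_apply.2 (e_inv M)
  let u := (hA.map e).unit
  have u_inv : ((u⁻¹ : ((m → 𝕜) →L[𝕜] (m → 𝕜))ˣ) : (m → 𝕜) →L[𝕜] (m → 𝕜)) = e A⁻¹ := by
    rw [e_inv, ← Ring.inverse_unit]
    rfl
  rw [inv_eq]
  refine (eL.symm.hasFDerivAt.comp A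
    ((hasFDerivAt_ringInverse u).comp A eL.hasFDerivAt)).congr_fderiv ?_
  ext1 Δ
  show eL.symm (-(↑u⁻¹ * e Δ * ↑u⁻¹)) = -(A⁻¹ * (Δ * A⁻¹))
  rw [eL.symm_apply_eq, u_inv]
  show -(e A⁻¹ * e Δ * e A⁻¹) = e (-(A⁻¹ * (Δ * A⁻¹)))
  rw [map_neg, map_mul, map_mul, mul_assoc]

end Matrix

section Kalman

variable {𝕜 : Type*} [NontriviallyNormedField 𝕜] {m n : Type*} [Fintype m] [Fintype n]

def innovationCov (H : Matrix m n 𝕜) (R : Matrix m m 𝕜) (P : Matrix n n 𝕜) : Matrix m m 𝕜 :=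
  H * P * Hᵀ + R

noncomputable def kalmanGain [DecidableEq m] (H : Matrix m n 𝕜) (R : Matrix m m 𝕜)
    (P : Matrix n n 𝕜) : Matrix n m 𝕜 :=
  P * Hᵀ * (innovationCov H R P)⁻¹

variable (H : Matrix m n 𝕜) (R : Matrix m m 𝕜) (P₀ : Matrix n n 𝕜)

theorem hasFDerivAt_innovationCov :
    HasFDerivAt (innovationCov H R) (mulRightCLM Hᵀ ∘L mulLeftCLM H) P₀ :=
  (mulRightCLM Hᵀ ∘L mulLeftCLM H).hasFDerivAt.add_const R

theorem hasFDerivAt_kalmanGain [CompleteSpace 𝕜] [DecidableEq m] [DecidableEq n]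
    (hS : IsUnit (innovationCov H R P₀)) :
    HasFDerivAt (kalmanGain H R)
      (mulLeftCLM (1 - kalmanGain H R P₀ * H) ∘L mulRightCLM (Hᵀ * (innovationCov H R P₀)⁻¹))
      P₀ := by
  have h : HasFDerivAt (kalmanGain H R) _ P₀ := (mulRightCLM Hᵀ).hasFDerivAt.matrix_mul
    ((hasFDerivAt_inv hS).comp P₀ (hasFDerivAt_innovationCov H R P₀))
  refine h.congr_fderiv ?_
  ext1 Δ
  set S := innovationCov H R P₀
  show P₀ * Hᵀ * -(S⁻¹ * (H * Δ * Hᵀ * S⁻¹)) + Δ * Hᵀ * S⁻¹ =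
    (1 - P₀ * Hᵀ * S⁻¹ * H) * (Δ * (Hᵀ * S⁻¹))
  simp only [Matrix.sub_mul, Matrix.one_mul, Matrix.mul_neg, Matrix.mul_assoc]
  abel

end Kalman

theorem stmt_4_general (n_x n_z : ℕ)
    (H : Matrix (Fin n_z) (Fin n_x) ℝ) (R : Matrix (Fin n_z) (Fin n_z) ℝ)
    (μ : Fin n_x → ℝ) (z : Fin n_z → ℝ)
    (P₀ : Matrix (Fin n_x) (Fin n_x) ℝ)
    (S₀ : Matrix (Fin n_z) (Fin n_z) ℝ) (hS₀ : S₀ = H * P₀ * Hᵀ + R)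
    (hS : IsUnit S₀)
    (K₀ : Matrix (Fin n_x) (Fin n_z) ℝ) (hK₀ : K₀ = P₀ * Hᵀ * S₀⁻¹) :
    ∃ L : Matrix (Fin n_x) (Fin n_x) ℝ →L[ℝ] (Fin n_x → ℝ),
      HasFDerivAt
        (fun P : Matrix (Fin n_x) (Fin n_x) ℝ =>
          μ + (P * Hᵀ * (H * P * Hᵀ + R)⁻¹).mulVec (z - H.mulVec μ)) L P₀ ∧
      ∀ Δ : Matrix (Fin n_x) (Fin n_x) ℝ,
        L Δ = ((1 - K₀ * H) * Δ * Hᵀ * S₀⁻¹).mulVec (z - H.mulVec μ) := by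
  subst hS₀ hK₀
  let applyTo : Matrix (Fin n_x) (Fin n_z) ℝ →L[ℝ] (Fin n_x → ℝ) :=
    LinearMap.toContinuousLinearMap ((mulVecBilin ℝ ℝ).flip (z - H *ᵥ μ))
  refine ⟨_, (applyTo.hasFDerivAt.comp P₀ (hasFDerivAt_kalmanGain H R P₀ hS)).const_add μ,
    fun Δ => ?_⟩
  show ((1 - P₀ * Hᵀ * (H * P₀ * Hᵀ + R)⁻¹ * H) * (Δ * (Hᵀ * (H * P₀ * Hᵀ + R)⁻¹))) *ᵥ _ = _
  simp only [Matrix.mul_assoc]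

/-- With fixed `μ`, `z`, and `S₀ = H·P₀·Hᵀ + R` invertible,
`K₀ = P₀·Hᵀ·S₀⁻¹`, the posterior-mean map `P ↦ μ + K(P) ·ᵥ (z − H ·ᵥ μ)` is Fréchet
differentiable at `P₀` with derivative
`Δ ↦ ((I − K₀·H)·Δ·Hᵀ·S₀⁻¹) ·ᵥ (z − H ·ᵥ μ)`. -/
theorem stmt_4 (n_x n_z : ℕ) (hnx : 0 < n_x) (hnz : 0 < n_z)
    (H : Matrix (Fin n_z) (Fin n_x) ℝ) (R : Matrix (Fin n_z) (Fin n_z) ℝ)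
    (μ : Fin n_x → ℝ) (z : Fin n_z → ℝ)
    (P₀ : Matrix (Fin n_x) (Fin n_x) ℝ)
    (S₀ : Matrix (Fin n_z) (Fin n_z) ℝ) (hS₀ : S₀ = H * P₀ * Hᵀ + R)
    (hS : IsUnit S₀)
    (K₀ : Matrix (Fin n_x) (Fin n_z) ℝ) (hK₀ : K₀ = P₀ * Hᵀ * S₀⁻¹) :
    ∃ L : Matrix (Fin n_x) (Fin n_x) ℝ →L[ℝ] (Fin n_x → ℝ),
      HasFDerivAt
        (fun P : Matrix (Fin n_x) (Fin n_x) ℝ =>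
          μ + (P * Hᵀ * (H * P * Hᵀ + R)⁻¹).mulVec (z - H.mulVec μ)) L P₀ ∧
      ∀ Δ : Matrix (Fin n_x) (Fin n_x) ℝ,
        L Δ = ((1 - K₀ * H) * Δ * Hᵀ * S₀⁻¹).mulVec (z - H.mulVec μ) :=
  stmt_4_general n_x n_z H R μ z P₀ S₀ hS₀ hS K₀ hK₀
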